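/- For Ω₀ > 0 and real ω, ∫_{-∞}^{∞} 2Ω₀ sech(Ω₀ t) · (1 - 2 sech²(Ω₀ t)) · cos(ωt) dt = -2π (ω/Ω₀)² / cosh(πω/(2Ω₀)). -/

import Mathlib

/-!
Since `sech'' = sech - 2 sech³`, the integrand is `2 Ω₀ sech''(Ω₀ t) cos (ω t)`. Rescaling by `Ω₀`
and integrating by parts twice turns the integral into `-2 α²` times the cosine transform of `sech`
at `α = ω / Ω₀`, and that transform is `π / cosh (π α / 2)`. The latter is a Beta integral in
disguise: substituting the logistic function `t = σ(2s)` in `Β(u, 1 - u) = π / sin (π u)` gives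
`∫ sech s · exp ((2u - 1) s) ds`.
-/

open Real MeasureTheory

noncomputable def sech (x : ℝ) : ℝ := (Real.cosh x)⁻¹

lemma sech_pos (x : ℝ) : 0 < sech x := inv_pos.mpr (cosh_pos x)

lemma sech_le_one (x : ℝ) : sech x ≤ 1 := inv_le_one_of_one_le₀ (one_le_cosh x)

@[fun_prop]
lemma continuous_sech : Continuous sech :=
  continuous_cosh.inv₀ fun x => (cosh_pos x).ne'

@[fun_prop]
lemma continuous_tanh : Continuous tanh := by
  rw [show tanh = sinh / cosh from funext tanh_eq_sinh_div_cosh]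
  exact continuous_sinh.div continuous_cosh fun x => (cosh_pos x).ne'

lemma sech_le_four_mul_inv_one_add_sq (x : ℝ) : sech x ≤ 4 * (1 + x ^ 2)⁻¹ := by
  have hexp : 1 + |x| + |x| ^ 2 / 2 ≤ exp |x| := quadratic_le_exp_of_nonneg (abs_nonneg x)
  have hcosh : (1 + x ^ 2) / 4 ≤ cosh x := by
    rw [← cosh_abs, cosh_eq]
    nlinarith [exp_pos (-|x|), sq_abs x, abs_nonneg x]
  calc sech x ≤ ((1 + x ^ 2) / 4)⁻¹ := inv_anti₀ (by positivity) hcosh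
    _ = 4 * (1 + x ^ 2)⁻¹ := by rw [inv_div, div_eq_mul_inv]

lemma integrable_sech : Integrable sech :=
  (integrable_inv_one_add_sq.const_mul 4).mono' continuous_sech.aestronglyMeasurable
    (.of_forall fun x => by
      rw [norm_of_nonneg (sech_pos x).le]; exact sech_le_four_mul_inv_one_add_sq x)

lemma integrable_sech_mul_tanh : Integrable fun x => sech x * tanh x :=
  integrable_sech.mul_bdd (c := 1) (by fun_prop) (.of_forall fun x => (abs_tanh_lt_one x).le)

lemma integrable_sech_mul_one_sub_two_mul_sech_sq :
    Integrable fun x => sech x * (1 - 2 * sech x ^ 2) :=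
  integrable_sech.mul_bdd (c := 1) (by fun_prop) (.of_forall fun x => by
      have h₀ := sech_pos x
      have h₁ := sech_le_one x
      rw [Real.norm_eq_abs, abs_le]
      constructor <;> nlinarith)

lemma hasDerivAt_sech (x : ℝ) : HasDerivAt sech (-(sech x * tanh x)) x :=
  ((hasDerivAt_cosh x).inv (cosh_pos x).ne').congr_deriv <| by
    simp only [sech, tanh_eq_sinh_div_cosh]
    field_simp

lemma hasDerivAt_neg_sech_mul_tanh (x : ℝ) :
    HasDerivAt (fun x => -(sech x * tanh x)) (sech x * (1 - 2 * sech x ^ 2)) x := by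
  have h := ((hasDerivAt_sinh x).fun_div (hasDerivAt_cosh x |>.fun_pow 2)
    (pow_ne_zero 2 (cosh_pos x).ne')).fun_neg
  simp only [sech, tanh_eq_sinh_div_cosh]
  refine (h.congr_of_eventuallyEq (.of_forall fun y => ?_)).congr_deriv ?_
  · field_simp
  · simp only [Nat.cast_ofNat, Nat.add_one_sub_one, pow_one]
    field_simp
    linear_combination (-2) * cosh_sq x

theorem integral_deriv_deriv_mul_cos {f f' f'' : ℝ → ℝ}
    (hf : ∀ x, HasDerivAt f (f' x) x) (hf' : ∀ x, HasDerivAt f' (f'' x) x)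
    (hfi : Integrable f) (hf'i : Integrable f') (hf''i : Integrable f'') (α : ℝ) :
    ∫ x, f'' x * cos (α * x) = -α ^ 2 * ∫ x, f x * cos (α * x) := by
  have bdd : ∀ {g u : ℝ → ℝ} (c : ℝ), Integrable g → Continuous u → (∀ x, |u x| ≤ c) →
      Integrable (u * g) := fun c hg hu hb =>
    hg.bdd_mul hu.aestronglyMeasurable (.of_forall hb)
  have hcos (x : ℝ) : HasDerivAt (fun x => cos (α * x)) (-(α * sin (α * x))) x := by
    simpa [mul_comm] using ((hasDerivAt_id x).const_mul α).cos
  have hsin (x : ℝ) : HasDerivAt (fun x => sin (α * x)) (α * cos (α * x)) x := by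
    simpa [mul_comm] using ((hasDerivAt_id x).const_mul α).sin
  have hcos_bdd (x : ℝ) : |cos (α * x)| ≤ 1 := abs_cos_le_one _
  have hsin_bdd (x : ℝ) : |sin (α * x)| ≤ 1 := abs_sin_le_one _
  have first : ∫ x, cos (α * x) * f'' x = α * ∫ x, sin (α * x) * f' x := by
    rw [integral_mul_deriv_eq_deriv_mul_of_integrable (fun x _ => hcos x) (fun x _ => hf' x)
      (bdd 1 hf''i (by fun_prop) hcos_bdd) (bdd |α| hf'i (by fun_prop) fun x => by
        simpa [abs_mul] using mul_le_mul_of_nonneg_left (hsin_bdd x) (abs_nonneg α))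
      (bdd 1 hf'i (by fun_prop) hcos_bdd), ← integral_const_mul]
    simp only [neg_mul, integral_neg, neg_neg, mul_assoc]
  have second : ∫ x, sin (α * x) * f' x = -(α * ∫ x, cos (α * x) * f x) := by
    rw [integral_mul_deriv_eq_deriv_mul_of_integrable (fun x _ => hsin x) (fun x _ => hf x)
      (bdd 1 hf'i (by fun_prop) hsin_bdd) (bdd |α| hfi (by fun_prop) fun x => by
        simpa [abs_mul] using mul_le_mul_of_nonneg_left (hcos_bdd x) (abs_nonneg α))
      (bdd 1 hfi (by fun_prop) hsin_bdd), ← integral_const_mul]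
    simp only [mul_assoc]
  simp only [mul_comm _ (cos _)]
  rw [first, second]
  ring

theorem betaIntegral_eq_integral_sigmoid (u v : ℂ) :
    Complex.betaIntegral u v = ∫ x : ℝ, (sigmoid x : ℂ) ^ u * (1 - (sigmoid x : ℂ)) ^ v := by
  have hsub := integral_image_eq_integral_abs_deriv_smul MeasurableSet.univ
    (fun x _ => (hasDerivAt_sigmoid x).hasDerivWithinAt) sigmoid_injective.injOn
    (fun t : ℝ => (t : ℂ) ^ (u - 1) * (1 - (t : ℂ)) ^ (v - 1))
  rw [Set.image_univ, range_sigmoid, setIntegral_univ] at hsub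
  rw [Complex.betaIntegral, intervalIntegral.integral_of_le zero_le_one,
    integral_Ioc_eq_integral_Ioo, hsub]
  congr 1 with x
  have h₀ : (sigmoid x : ℂ) ≠ 0 := Complex.ofReal_ne_zero.mpr (sigmoid_pos x).ne'
  have h₁ : 1 - (sigmoid x : ℂ) ≠ 0 := by
    rw [← Complex.ofReal_one, ← Complex.ofReal_sub, Complex.ofReal_ne_zero]
    exact (sub_pos.mpr (sigmoid_lt_one x)).ne'
  rw [abs_of_pos (mul_pos (sigmoid_pos x) (sub_pos.mpr (sigmoid_lt_one x))), Complex.real_smul,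
    Complex.cpow_sub _ _ h₀, Complex.cpow_sub _ _ h₁, Complex.cpow_one, Complex.cpow_one]
  push_cast
  field_simp

lemma sigmoid_two_mul (s : ℝ) : sigmoid (2 * s) = exp s / (2 * cosh s) := by
  rw [sigmoid_def, cosh_eq, inv_eq_one_div, div_eq_div_iff (by positivity) (by positivity)]
  have : exp (-(2 * s)) * exp s = exp (-s) := by rw [← exp_add]; ring_nf
  linear_combination (-1 : ℝ) * this

lemma one_sub_sigmoid_two_mul (s : ℝ) : 1 - sigmoid (2 * s) = exp (-s) / (2 * cosh s) := by
  rw [← sigmoid_neg, ← mul_neg, sigmoid_two_mul, cosh_neg]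

lemma ofReal_cpow_def_of_pos {x : ℝ} (hx : 0 < x) (y : ℂ) :
    (x : ℂ) ^ y = Complex.exp (Real.log x * y) := by
  rw [Complex.cpow_def_of_ne_zero (Complex.ofReal_ne_zero.mpr hx.ne'), Complex.ofReal_log hx.le]

lemma two_mul_sigmoid_cpow_mul_one_sub_sigmoid_cpow (s : ℝ) (w : ℂ) :
    2 * (sigmoid (2 * s) : ℂ) ^ ((1 + w) / 2) * (1 - (sigmoid (2 * s) : ℂ)) ^ ((1 - w) / 2)
      = sech s * Complex.exp (w * s) := by
  have hc : 0 < 2 * cosh s := by positivity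
  have hlog_pos : Real.log (sigmoid (2 * s)) = s - Real.log (2 * cosh s) := by
    rw [sigmoid_two_mul, Real.log_div (exp_pos s).ne' hc.ne', Real.log_exp]
  have hlog_neg : Real.log (1 - sigmoid (2 * s)) = -s - Real.log (2 * cosh s) := by
    rw [one_sub_sigmoid_two_mul, Real.log_div (exp_pos _).ne' hc.ne', Real.log_exp]
  have hexp : Complex.exp (-Real.log (2 * cosh s)) = 2⁻¹ * sech s := by
    rw [← Complex.ofReal_neg, ← Complex.ofReal_exp, Real.exp_neg, Real.exp_log hc, sech]
    push_cast
    ring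
  have hcast : 1 - (sigmoid (2 * s) : ℂ) = ((1 - sigmoid (2 * s) : ℝ) : ℂ) := by push_cast; rfl
  rw [hcast, ofReal_cpow_def_of_pos (sigmoid_pos _),
    ofReal_cpow_def_of_pos (sub_pos.mpr (sigmoid_lt_one _)), hlog_pos, hlog_neg, mul_assoc,
    ← Complex.exp_add]
  rw [show ((s - Real.log (2 * cosh s) : ℝ) : ℂ) * ((1 + w) / 2)
      + ((-s - Real.log (2 * cosh s) : ℝ) : ℂ) * ((1 - w) / 2)
      = -Real.log (2 * cosh s) + w * s by push_cast; ring, Complex.exp_add, hexp]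
  ring

theorem integral_sech_mul_cexp {w : ℂ} (hw₀ : -1 < w.re) (hw₁ : w.re < 1) :
    ∫ s : ℝ, (sech s : ℂ) * Complex.exp (w * s) = π / Complex.cos (π * w / 2) := by
  set u := (1 + w) / 2 with hu_def
  have hu : 0 < u.re := by
    simp only [hu_def, Complex.div_ofNat_re, Complex.add_re, Complex.one_re]
    linarith
  have hv : 0 < (1 - u).re := by
    simp only [hu_def, Complex.sub_re, Complex.div_ofNat_re, Complex.add_re, Complex.one_re]
    linarith
  have hsin : Complex.sin (π * u) = Complex.cos (π * w / 2) := by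
    rw [← Complex.sin_add_pi_div_two, hu_def]; ring_nf
  calc ∫ s : ℝ, (sech s : ℂ) * Complex.exp (w * s)
      = 2 * ∫ s : ℝ, (sigmoid (2 * s) : ℂ) ^ u * (1 - (sigmoid (2 * s) : ℂ)) ^ (1 - u) := by
        rw [← integral_const_mul]
        congr 1 with s
        rw [← two_mul_sigmoid_cpow_mul_one_sub_sigmoid_cpow s w,
          show (1 - w) / 2 = 1 - u by rw [hu_def]; ring, mul_assoc]
    _ = Complex.betaIntegral u (1 - u) := by
        rw [Measure.integral_comp_mul_left
          (fun x => (sigmoid x : ℂ) ^ u * (1 - (sigmoid x : ℂ)) ^ (1 - u)),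
          betaIntegral_eq_integral_sigmoid, Complex.real_smul]
        norm_num
        ring
    _ = Complex.Gamma u * Complex.Gamma (1 - u) := by
        rw [Complex.Gamma_mul_Gamma_eq_betaIntegral hu hv, add_sub_cancel, Complex.Gamma_one,
          one_mul]
    _ = π / Complex.cos (π * w / 2) := by rw [Complex.Gamma_mul_Gamma_one_sub, hsin]

theorem integral_sech_mul_cos (α : ℝ) :
    ∫ s : ℝ, sech s * cos (α * s) = π / cosh (π * α / 2) := by
  have hint : Integrable fun s : ℝ => (sech s : ℂ) * Complex.exp (α * Complex.I * s) :=
    integrable_sech.ofReal.mul_bdd (c := 1) (by fun_prop) (.of_forall fun s => by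
      rw [show (α : ℂ) * Complex.I * s = (α * s : ℝ) * Complex.I by push_cast; ring,
        Complex.norm_exp_ofReal_mul_I])
  have hcos : Complex.cos (π * (α * Complex.I) / 2) = cosh (π * α / 2) := by
    rw [Complex.ofReal_cosh, ← Complex.cos_mul_I]
    push_cast
    ring_nf
  have h := congrArg Complex.re (integral_sech_mul_cexp (w := α * Complex.I) (by simp) (by simp))
  have hre := integral_re hint
  simp only [RCLike.re_to_complex] at hre
  rw [← hre, hcos, ← Complex.ofReal_div, Complex.ofReal_re] at h
  rw [← h]
  congr 1 with s
  rw [show (α : ℂ) * Complex.I * s = (α * s : ℝ) * Complex.I by push_cast; ring,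
    Complex.re_ofReal_mul, Complex.exp_ofReal_mul_I_re]

theorem melnikov_drive_integral (Ω₀ ω : ℝ) (hΩ : 0 < Ω₀) :
    ∫ t : ℝ, 2 * Ω₀ * sech (Ω₀ * t) * (1 - 2 * (sech (Ω₀ * t)) ^ 2) * Real.cos (ω * t)
      = -2 * Real.pi * (ω / Ω₀) ^ 2 / Real.cosh (Real.pi * ω / (2 * Ω₀)) := by
  set α := ω / Ω₀ with hα
  have hsecond := integral_deriv_deriv_mul_cos hasDerivAt_sech hasDerivAt_neg_sech_mul_tanh
    integrable_sech integrable_sech_mul_tanh.neg integrable_sech_mul_one_sub_two_mul_sech_sq α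
  rw [integral_sech_mul_cos] at hsecond
  set g := fun s => sech s * (1 - 2 * sech s ^ 2) * cos (α * s)
  calc ∫ t : ℝ, 2 * Ω₀ * sech (Ω₀ * t) * (1 - 2 * (sech (Ω₀ * t)) ^ 2) * Real.cos (ω * t)
      = 2 * Ω₀ * ∫ t : ℝ, g (Ω₀ * t) := by
        rw [← integral_const_mul]
        congr 1 with t
        have hωt : α * (Ω₀ * t) = ω * t := by rw [hα]; field_simp
        simp only [g, hωt]
        ring
    _ = -2 * π * α ^ 2 / cosh (π * ω / (2 * Ω₀)) := by
        rw [Measure.integral_comp_mul_left g, hsecond, abs_of_pos (inv_pos.mpr hΩ), smul_eq_mul,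
          hα]
        field_simp
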